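/- arXiv:1709.08701 — 4 statements merged into one kernel-verified Lean document; each statement's English description precedes it below -/
import Mathlib

section
/- Let m = x_j^{a_j} e_j^{b_j} e_{j+1}^{b_{j+1}} ⋯ e_{j+2k}^{b_{j+2k}} x_{j+2k+1}^{a_{j+2k+1}} be a monomial in k[x_1,…,x_{2n+1}] (indices taken modulo 2n+1 along the cycle C_{2n+1}), where a_j ≥ 1 and a_{j+2k+1} ≥ 1. If b_{j+2h+1} ≥ 1 for all h ∈ {0,…,k−1}, then this factorization of m is not optimal; that is, b(m) > b_j + b_{j+1} + ⋯ + b_{j+2k}. -/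
open MvPolynomial
open Fin.NatCast

noncomputable section

/-- The ideal generated by the variables indexed by `S`. -/
def varIdeal (K : Type*) [Field K] (N : ℕ) (S : Finset (Fin N)) :
    Ideal (MvPolynomial (Fin N) K) :=
  Ideal.span ((fun i => (X i : MvPolynomial (Fin N) K)) '' S)

/-- The edge ideal of a graph `G`, generated by `X i * X j` for edges `{i, j}`. -/
def edgeIdeal (K : Type*) [Field K] {N : ℕ} (G : SimpleGraph (Fin N)) :
    Ideal (MvPolynomial (Fin N) K) :=
  Ideal.span {p | ∃ i j, G.Adj i j ∧ p = X i * X j}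

/-- `S` is a vertex cover of `G`: every edge meets `S`. -/
def IsVertexCover {N : ℕ} (G : SimpleGraph (Fin N)) (S : Finset (Fin N)) : Prop :=
  ∀ ⦃i j : Fin N⦄, G.Adj i j → i ∈ S ∨ j ∈ S

/-- `S` is a minimal vertex cover of `G`. -/
def IsMinVertexCover {N : ℕ} (G : SimpleGraph (Fin N)) (S : Finset (Fin N)) : Prop :=
  IsVertexCover G S ∧ ∀ T ⊂ S, ¬ IsVertexCover G T

/-- The `t`-th symbolic power of the edge ideal of `G`:
the intersection of the `t`-th powers of the minimal vertex cover primes. -/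
def symbolicPower (K : Type*) [Field K] {N : ℕ} (G : SimpleGraph (Fin N)) (t : ℕ) :
    Ideal (MvPolynomial (Fin N) K) :=
  ⨅ (S : Finset (Fin N)) (_ : IsMinVertexCover G S), varIdeal K N S ^ t

/-- The cycle graph on `Fin m`, with edges `{i, i+1 mod m}`. -/
def cycleGraph (m : ℕ) : SimpleGraph (Fin m) :=
  SimpleGraph.fromRel (fun i j => (j : ℕ) = ((i : ℕ) + 1) % m)

/-- The set `L(t)` of monomials of degree at least `2t` whose weight with respect to every
minimal vertex cover is at least `t`. -/
def Lset (K : Type*) [Field K] {N : ℕ} (G : SimpleGraph (Fin N)) (t : ℕ) :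
    Set (MvPolynomial (Fin N) K) :=
  {p | ∃ a : Fin N →₀ ℕ, p = monomial a 1 ∧ 2 * t ≤ ∑ i, a i ∧
    ∀ S : Finset (Fin N), IsMinVertexCover G S → t ≤ ∑ i ∈ S, a i}

/-- The set `D(t)` of monomials of degree less than `2t` whose weight with respect to every
minimal vertex cover is at least `t`. -/
def Dset (K : Type*) [Field K] {N : ℕ} (G : SimpleGraph (Fin N)) (t : ℕ) :
    Set (MvPolynomial (Fin N) K) :=
  {p | ∃ a : Fin N →₀ ℕ, p = monomial a 1 ∧ (∑ i, a i) < 2 * t ∧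
    ∀ S : Finset (Fin N), IsMinVertexCover G S → t ≤ ∑ i ∈ S, a i}

/-- `α(J)`: the least total degree of a nonzero polynomial in `J`. -/
def alphaDeg {K : Type*} [Field K] {N : ℕ} (J : Ideal (MvPolynomial (Fin N) K)) : ℕ :=
  sInf {d | ∃ f ∈ J, f ≠ 0 ∧ f.totalDegree = d}

/-- The symbolic defect: the minimal number of generators one must add to `I(G)^t`
to obtain the symbolic power `I(G)^(t)`. -/
def sdefect (K : Type*) [Field K] {N : ℕ} (G : SimpleGraph (Fin N)) (t : ℕ) : ℕ :=
  sInf {c | ∃ F : Finset (MvPolynomial (Fin N) K), F.card = c ∧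
    symbolicPower K G t = edgeIdeal K G ^ t + Ideal.span (F : Set (MvPolynomial (Fin N) K))}

/-- The graph consisting of the odd cycle on vertices `0, …, 2n` (that is,
`x_1, …, x_{2n+1}`) together with one extra vertex `2n+1` (that is, `x_{2n+2}`)
joined to vertex `0` (that is, `x_1`) by an edge. -/
def appendedCycle (n : ℕ) : SimpleGraph (Fin (2 * n + 2)) :=
  SimpleGraph.fromRel (fun i j =>
    ((j : ℕ) = (i : ℕ) + 1 ∧ (j : ℕ) ≤ 2 * n) ∨
    ((i : ℕ) = 2 * n ∧ (j : ℕ) = 0) ∨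
    ((i : ℕ) = 0 ∧ (j : ℕ) = 2 * n + 1))

/-!
Since `x_j e_{j+1} = e_j x_{j+2}`, the variable `x_j` outside the edges can be walked along the
path two steps at a time without changing the number of edges, until it sits next to
`x_{j+2k+1}`; there `x_{j+2k} x_{j+2k+1} = e_{j+2k}` produces one extra edge.
-/

section
variable {V : Type*} [DecidableEq V]

lemma exists_eq_add_single {a : V → ℕ} {i : V} (ha : 1 ≤ a i) :
    ∃ a₀ : V → ℕ, a = a₀ + Pi.single i 1 := by
  refine ⟨Function.update a i (a i - 1), funext fun l => ?_⟩
  by_cases hl : l = i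
  · subst hl; simp; omega
  · simp [hl]

variable [AddCommGroupWithOne V]

/-- The exponent of `x_i` in `∏ x_i ^ a_i * e_i ^ b_i`, where `e_i = x_i * x_(i+1)`. -/
def monomialExponent (a b : V → ℕ) (i : V) : ℕ := a i + b i + b (i - 1)

lemma single_one_apply_sub_one (i l : V) :
    (Pi.single i 1 : V → ℕ) (l - 1) = (Pi.single (i + 1) 1 : V → ℕ) l := by
  simp only [Pi.single_apply, sub_eq_iff_eq_add]

lemma monomialExponent_add_single_add_single (a b : V → ℕ) (i : V) :
    monomialExponent (a + Pi.single i 1 + Pi.single (i + 1) 1) b =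
      monomialExponent a (b + Pi.single i 1) := by
  funext l
  simp only [monomialExponent, Pi.add_apply, single_one_apply_sub_one]
  ring

lemma monomialExponent_shift (a b : V → ℕ) (i : V) :
    monomialExponent (a + Pi.single i 1) (b + Pi.single (i + 1) 1) =
      monomialExponent (a + Pi.single (i + 2) 1) (b + Pi.single i 1) := by
  funext l
  simp only [monomialExponent, Pi.add_apply, single_one_apply_sub_one, add_assoc,
    one_add_one_eq_two]
  ring

theorem exists_monomialExponent_eq_of_alternating_path [Fintype V] (k : ℕ)
    (hpath : ∀ c : ℕ, 0 < c → c ≤ 2 * k + 1 → (c : V) ≠ 0) (j : V) (a b : V → ℕ)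
    (haj : 1 ≤ a j) (haj' : 1 ≤ a (j + ((2 * k + 1 : ℕ) : V)))
    (hodd : ∀ h < k, 1 ≤ b (j + ((2 * h + 1 : ℕ) : V))) :
    ∃ a' b' : V → ℕ, monomialExponent a b = monomialExponent a' b' ∧
      ∑ i, b' i = ∑ i, b i + 1 := by
  induction k generalizing j a b with
  | zero =>
    obtain ⟨a₀, rfl⟩ := exists_eq_add_single haj
    have hone : (1 : V) ≠ 0 := by exact_mod_cast hpath 1 one_pos le_rfl
    obtain ⟨a₁, rfl⟩ : ∃ a₁ : V → ℕ, a₀ = a₁ + Pi.single (j + 1) 1 :=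
      exists_eq_add_single (by simpa [Pi.single_apply, hone] using haj')
    refine ⟨a₁, b + Pi.single j 1, ?_, by simp [Finset.sum_add_distrib]⟩
    rw [add_right_comm, monomialExponent_add_single_add_single]
  | succ k ih =>
    obtain ⟨a₀, rfl⟩ := exists_eq_add_single haj
    obtain ⟨b₀, rfl⟩ := exists_eq_add_single (by simpa using hodd 0 k.succ_pos)
    have hshift (m : ℕ) : j + 2 + (m : V) = j + ((m + 2 : ℕ) : V) := by push_cast; abel
    have hend :
        1 ≤ (a₀ + Pi.single (j + 2) 1 : V → ℕ) (j + 2 + ((2 * k + 1 : ℕ) : V)) := by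
      have hne : j + ((2 * (k + 1) + 1 : ℕ) : V) ≠ j :=
        add_ne_left.mpr (hpath _ (by omega) le_rfl)
      rw [hshift, show 2 * k + 1 + 2 = 2 * (k + 1) + 1 by ring]
      simp only [Pi.add_apply, Pi.single_eq_of_ne hne] at haj' ⊢
      omega
    have hodd' :
        ∀ h < k, 1 ≤ (b₀ + Pi.single j 1 : V → ℕ) (j + 2 + ((2 * h + 1 : ℕ) : V)) := by
      intro h hh
      have hne : j + ((2 * (h + 1) + 1 : ℕ) : V) ≠ j + 1 := by
        rw [Ne, show 2 * (h + 1) + 1 = 1 + (2 * h + 2) by ring, Nat.cast_add, Nat.cast_one,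
          ← add_assoc, add_eq_left]
        exact hpath _ (by omega) (by omega)
      have hb := hodd (h + 1) (by omega)
      rw [hshift, show 2 * h + 1 + 2 = 2 * (h + 1) + 1 by ring]
      simp only [Pi.add_apply, Pi.single_eq_of_ne hne] at hb ⊢
      omega
    obtain ⟨a', b', hexp, hsum⟩ := ih (fun c hc hck => hpath c hc (by omega)) (j + 2)
      (a₀ + Pi.single (j + 2) 1) (b₀ + Pi.single j 1) (by simp) hend hodd'
    refine ⟨a', b', by rw [monomialExponent_shift, hexp], ?_⟩
    simpa [Finset.sum_add_distrib] using hsum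
end

theorem not_optimal_of_odd_path_general (n : ℕ) (j : Fin (2 * n + 1)) (k : ℕ)
    (hk : k < n) (a b : Fin (2 * n + 1) → ℕ)
    (haj : 1 ≤ a j)
    (haj' : 1 ≤ a (j + ((2 * k + 1 : ℕ) : Fin (2 * n + 1))))
    (hodd : ∀ h : ℕ, h < k → 1 ≤ b (j + ((2 * h + 1 : ℕ) : Fin (2 * n + 1)))) :
    ∃ a' b' : Fin (2 * n + 1) → ℕ,
      (∀ i, a i + b i + b (i - 1) = a' i + b' i + b' (i - 1)) ∧
      ∑ i, b i < ∑ i, b' i := by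
  have hpath : ∀ c : ℕ, 0 < c → c ≤ 2 * k + 1 → (c : Fin (2 * n + 1)) ≠ 0 := by
    intro c hc hck hdvd
    have := Nat.le_of_dvd hc (Fin.natCast_eq_zero.mp hdvd)
    omega
  open Fin.CommRing in
  obtain ⟨a', b', hexp, hsum⟩ :=
    exists_monomialExponent_eq_of_alternating_path k hpath j a b haj haj' hodd
  exact ⟨a', b', congrFun hexp, by omega⟩

/-- Suppose a monomial on `C_{2n+1}` is factored as
`m = x_j^{a_j} e_j^{b_j} e_{j+1}^{b_{j+1}} ⋯ e_{j+2k}^{b_{j+2k}} x_{j+2k+1}^{a_{j+2k+1}}`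
(indices mod `2n+1`), with ancillaries `a_j, a_{j+2k+1} ≥ 1` at both ends, and with
`b_{j+2h+1} ≥ 1` for all `h ∈ {0,…,k-1}`.  Then this factorization is not optimal:
there is a factorization of the same monomial using strictly more edges. -/
theorem not_optimal_of_odd_path (n : ℕ) (hn : 1 ≤ n) (j : Fin (2 * n + 1)) (k : ℕ)
    (hk : k < n) (a b : Fin (2 * n + 1) → ℕ)
    (haj : 1 ≤ a j)
    (haj' : 1 ≤ a (j + ((2 * k + 1 : ℕ) : Fin (2 * n + 1))))
    (ha0 : ∀ i : Fin (2 * n + 1),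
      i ≠ j → i ≠ j + ((2 * k + 1 : ℕ) : Fin (2 * n + 1)) → a i = 0)
    (hb0 : ∀ i : Fin (2 * n + 1),
      (∀ c : ℕ, c ≤ 2 * k → i ≠ j + ((c : ℕ) : Fin (2 * n + 1))) → b i = 0)
    (hodd : ∀ h : ℕ, h < k → 1 ≤ b (j + ((2 * h + 1 : ℕ) : Fin (2 * n + 1)))) :
    ∃ a' b' : Fin (2 * n + 1) → ℕ,
      (∀ i, a i + b i + b (i - 1) = a' i + b' i + b' (i - 1)) ∧
      ∑ i, b i < ∑ i, b' i :=
  not_optimal_of_odd_path_general n j k hk a b haj haj' hodd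
end
end

section
/- Let I = I(C_{2n+1}) be the edge ideal of the odd cycle C_{2n+1} in R = k[x_1,…,x_{2n+1}]. Then for every t ≥ 1, I^t = (L(t)), the ideal generated by the set L(t). -/
open MvPolynomial

noncomputable section

/-!
Every product of `t` edges has degree `2t` and meets every vertex cover at least `t` times, so
`I^t ⊆ (L(t))`. Conversely, let `x^a` have degree at least `2t ≥ 2` and weight at least `t` on
every vertex cover. It suffices to find an edge `x_i x_{i+1}` dividing `x^a` such that no cover
of weight `t` contains both `i` and `i+1`: then `x^a / (x_i x_{i+1})` satisfies the same conditions
for `t - 1`, and induction applies. If there were no such edge, exchanging `i+1` for `i+2` in a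
cover of weight `t` through `i, i+1` shows `a_{i+1} ≤ a_{i+2}` whenever `a_i, a_{i+1} > 0`. Starting
from an edge in the support of `a` (which exists, as otherwise the zeros of `a` form a cover of
weight `0`), this propagates around the cycle and forces `a` to be a positive constant `c`. But a
vertex cover of `C_{2n+1}` has at least `n + 1` vertices, so a cover of weight `t` would give
`(2n + 2) c ≤ 2t ≤ (2n + 1) c`.
-/

section Graph

variable {K : Type*} [Field K] {N : ℕ} {G : SimpleGraph (Fin N)}

theorem IsVertexCover.exists_isMinVertexCover_subset {S : Finset (Fin N)}
    (hS : IsVertexCover G S) : ∃ T ⊆ S, IsMinVertexCover G T := by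
  induction S using Finset.strongInduction with
  | H S ih =>
    by_cases h : ∀ T ⊂ S, ¬ IsVertexCover G T
    · exact ⟨S, subset_rfl, hS, h⟩
    · push Not at h
      obtain ⟨T, hTS, hT⟩ := h
      obtain ⟨U, hUT, hU⟩ := ih T hTS hT
      exact ⟨U, hUT.trans hTS.subset, hU⟩

theorem IsVertexCover.of_erase_subset {S T : Finset (Fin N)} {v : Fin N}
    (hS : IsVertexCover G S) (hST : S.erase v ⊆ T) (hv : ∀ w, G.Adj v w → w ∈ T) :
    IsVertexCover G T := by
  intro x y hxy
  rcases hS hxy with hx | hy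
  · by_cases hxv : x = v
    · exact .inr (hv y (hxv ▸ hxy))
    · exact .inl (hST (Finset.mem_erase.2 ⟨hxv, hx⟩))
  · by_cases hyv : y = v
    · exact .inl (hv x (hyv ▸ hxy.symm))
    · exact .inr (hST (Finset.mem_erase.2 ⟨hyv, hy⟩))

/-- Exchanging `v` for `u` in `S` gives another vertex cover, whose weight is at least that of
`S`. -/
theorem IsVertexCover.apply_le_of_forall_sum_le {S : Finset (Fin N)} {a : Fin N → ℕ}
    {u v : Fin N} (hS : IsVertexCover G S)
    (hmin : ∀ T, IsVertexCover G T → ∑ i ∈ S, a i ≤ ∑ i ∈ T, a i) (hv : v ∈ S)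
    (hN : ∀ w, G.Adj v w → w ≠ u → w ∈ S) : a v ≤ a u := by
  have hT : IsVertexCover G (insert u (S.erase v)) := by
    refine hS.of_erase_subset (Finset.subset_insert _ _) fun w hw => ?_
    by_cases hwu : w = u
    · exact hwu ▸ Finset.mem_insert_self _ _
    · exact Finset.mem_insert_of_mem (Finset.mem_erase.2 ⟨hw.ne', hN w hw hwu⟩)
  have hins : ∑ i ∈ insert u (S.erase v), a i ≤ a u + ∑ i ∈ S.erase v, a i := by
    by_cases hu : u ∈ S.erase v
    · rw [Finset.insert_eq_of_mem hu]; omega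
    · rw [Finset.sum_insert hu]
  have := Finset.sum_erase_add S a hv
  have := hmin _ hT
  omega

theorem exists_adj_pos_of_forall_isVertexCover_pos {a : Fin N → ℕ}
    (h : ∀ S, IsVertexCover G S → 0 < ∑ i ∈ S, a i) : ∃ i j, G.Adj i j ∧ 0 < a i ∧ 0 < a j := by
  by_contra! hno
  have hZ : IsVertexCover G {i | a i = 0} := by
    intro i j hij
    simp only [Finset.mem_filter, Finset.mem_univ, true_and]
    by_contra! hne
    exact absurd (hno i j hij (Nat.pos_of_ne_zero hne.1)) (Nat.pos_of_ne_zero hne.2).not_ge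
  exact (h _ hZ).ne' (Finset.sum_eq_zero fun i hi => (Finset.mem_filter.1 hi).2)

theorem X_mul_X_mem_edgeIdeal {i j : Fin N} (h : G.Adj i j) :
    (X i * X j : MvPolynomial (Fin N) K) ∈ edgeIdeal K G :=
  Ideal.subset_span ⟨i, j, h, rfl⟩

theorem sum_add_single_add_single_apply (a : Fin N →₀ ℕ) (i j : Fin N) (S : Finset (Fin N)) :
    ∑ k ∈ S, (a + Finsupp.single i 1 + Finsupp.single j 1 : Fin N →₀ ℕ) k
      = ∑ k ∈ S, a k + (if i ∈ S then 1 else 0) + (if j ∈ S then 1 else 0) := by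
  simp [Finset.sum_add_distrib, Finsupp.single_eq_pi_single, Finset.sum_pi_single']

theorem monomial_add_single_add_single (a : Fin N →₀ ℕ) (i j : Fin N) :
    (monomial (a + Finsupp.single i 1 + Finsupp.single j 1) 1 : MvPolynomial (Fin N) K)
      = monomial a 1 * (X i * X j) := by
  rw [monomial_add_single, monomial_add_single, pow_one, pow_one, mul_assoc]

theorem edgeIdeal_pow_le_span_Lset (t : ℕ) :
    edgeIdeal K G ^ t ≤ Ideal.span (Lset K G t) := by
  induction t with
  | zero =>
    rw [pow_zero, Ideal.one_eq_top, top_le_iff, Ideal.eq_top_iff_one]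
    exact Ideal.subset_span ⟨0, by simp, by simp, fun _ _ => Nat.zero_le _⟩
  | succ t ih =>
    rw [pow_succ]
    refine (Ideal.mul_mono_left ih).trans ?_
    rw [edgeIdeal, Ideal.span_mul_span, Ideal.span_le]
    rintro _ ⟨_, ⟨a, rfl, hdeg, hcov⟩, _, ⟨i, j, hij, rfl⟩, rfl⟩
    simp only [← monomial_add_single_add_single]
    refine Ideal.subset_span ⟨_, rfl, ?_, fun S hS => ?_⟩
    · rw [sum_add_single_add_single_apply]
      simp only [Finset.mem_univ, if_true]
      omega
    · have := hcov S hS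
      rw [sum_add_single_add_single_apply]
      rcases hS.1 hij with h | h <;> simp only [h, if_true] <;> split_ifs <;> omega

/-- Dividing `x^a` by `x_i x_j` lowers the weight of each cover by the number of endpoints of
`ij` it contains, so the quotient satisfies the hypotheses for `t - 1`. -/
theorem monomial_mem_edgeIdeal_pow_of_exists_adj
    (hG : ∀ (t : ℕ) (a : Fin N →₀ ℕ), 0 < t → 2 * t ≤ ∑ i, a i →
      (∀ S, IsVertexCover G S → t ≤ ∑ i ∈ S, a i) →
      ∃ i j, G.Adj i j ∧ 0 < a i ∧ 0 < a j ∧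
        ∀ S, IsVertexCover G S → i ∈ S → j ∈ S → t < ∑ k ∈ S, a k)
    {t : ℕ} {a : Fin N →₀ ℕ} (hdeg : 2 * t ≤ ∑ i, a i)
    (hcov : ∀ S, IsVertexCover G S → t ≤ ∑ i ∈ S, a i) :
    (monomial a 1 : MvPolynomial (Fin N) K) ∈ edgeIdeal K G ^ t := by
  induction t generalizing a with
  | zero => simp
  | succ t ih =>
    obtain ⟨i, j, hij, hi, hj, hboth⟩ := hG (t + 1) a t.succ_pos hdeg hcov
    obtain ⟨b, rfl⟩ : ∃ b, a = b + Finsupp.single i 1 + Finsupp.single j 1 := by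
      refine ⟨a - Finsupp.single i 1 - Finsupp.single j 1, Finsupp.ext fun k => ?_⟩
      have := hij.ne
      simp only [Finsupp.coe_add, Finsupp.coe_tsub, Pi.add_apply, Pi.sub_apply,
        Finsupp.single_apply]
      split_ifs <;> subst_vars <;> first | contradiction | omega
    rw [monomial_add_single_add_single, pow_succ]
    refine Ideal.mul_mem_mul (ih ?_ fun S hS => ?_) (X_mul_X_mem_edgeIdeal hij)
    · rw [sum_add_single_add_single_apply] at hdeg
      simp only [Finset.mem_univ, if_true] at hdeg
      omega
    · have hw := hcov S hS
      have hw₂ := hboth S hS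
      rw [sum_add_single_add_single_apply] at hw hw₂
      split_ifs at hw hw₂ with hiS hjS
      · have := hw₂ hiS hjS
        omega
      all_goals omega

end Graph

section Cycle

variable {m : ℕ} [NeZero m]

theorem cycleGraph_adj {i j : Fin m} :
    (cycleGraph m).Adj i j ↔ i ≠ j ∧ (j = i + 1 ∨ i = j + 1) := by
  have h : ∀ u v : Fin m, (v : ℕ) = ((u : ℕ) + 1) % m ↔ v = u + 1 := fun u v => by
    rw [Fin.ext_iff, Fin.val_add, Fin.val_one', Nat.add_mod_mod]
  simp only [cycleGraph, SimpleGraph.fromRel_adj, h]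

theorem cycleGraph_adj_add_one (hm : 1 < m) (i : Fin m) : (cycleGraph m).Adj i (i + 1) := by
  refine cycleGraph_adj.2 ⟨fun h => ?_, .inl rfl⟩
  simp only [left_eq_add] at h
  simp [Fin.ext_iff, Nat.mod_eq_of_lt hm] at h

theorem IsVertexCover.cycleGraph_le_two_mul_card (hm : 1 < m) {S : Finset (Fin m)}
    (hS : IsVertexCover (cycleGraph m) S) : m ≤ 2 * S.card := by
  have hsub : Finset.univ ⊆ S ∪ S.image (· - 1) := fun i _ => by
    rcases hS (cycleGraph_adj_add_one hm i) with h | h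
    · exact Finset.mem_union_left _ h
    · exact Finset.mem_union_right _ (Finset.mem_image.2 ⟨_, h, add_sub_cancel_right i 1⟩)
  calc m = (Finset.univ : Finset (Fin m)).card := by simp
    _ ≤ (S ∪ S.image (· - 1)).card := Finset.card_le_card hsub
    _ ≤ S.card + (S.image (· - 1)).card := Finset.card_union_le _ _
    _ ≤ 2 * S.card := by linarith [S.card_image_le (f := (· - 1))]

theorem IsVertexCover.cycleGraph_apply_add_one_le {S : Finset (Fin m)} {a : Fin m → ℕ}
    (hS : IsVertexCover (cycleGraph m) S)
    (hmin : ∀ T, IsVertexCover (cycleGraph m) T → ∑ i ∈ S, a i ≤ ∑ i ∈ T, a i)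
    {i : Fin m} (hi : i ∈ S) (hi₁ : i + 1 ∈ S) : a (i + 1) ≤ a (i + 1 + 1) :=
  hS.apply_le_of_forall_sum_le hmin hi₁ fun w hw hne => by
    rcases (cycleGraph_adj.1 hw).2 with h | h
    · exact absurd h hne
    · exact add_right_cancel h ▸ hi

open Fin.NatCast in
theorem Fin.induction_add_one {P : Fin m → Prop} {i : Fin m} (hi : P i)
    (h : ∀ j, P j → P (j + 1)) (j : Fin m) : P j := by
  have key : ∀ k : ℕ, P (i + (k : Fin m)) := by
    intro k
    induction k with
    | zero => simpa using hi
    | succ k ih => simpa [Nat.cast_succ, add_assoc] using h _ ih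
  simpa using key (j - i).val

theorem cycleGraph_exists_edge_forall_isVertexCover_lt (hm : 1 < m) (hodd : Odd m)
    {t : ℕ} {a : Fin m → ℕ} (ht : 0 < t) (hdeg : 2 * t ≤ ∑ i, a i)
    (hcov : ∀ S, IsVertexCover (cycleGraph m) S → t ≤ ∑ i ∈ S, a i) :
    ∃ i, 0 < a i ∧ 0 < a (i + 1) ∧
      ∀ S, IsVertexCover (cycleGraph m) S → i ∈ S → i + 1 ∈ S → t < ∑ k ∈ S, a k := by
  by_contra! htight
  have hstep : ∀ i, 0 < a i → 0 < a (i + 1) → a (i + 1) ≤ a (i + 1 + 1) := fun i hi hi₁ => by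
    obtain ⟨S, hS, hiS, hi₁S, hSt⟩ := htight i hi hi₁
    exact hS.cycleGraph_apply_add_one_le (fun T hT => hSt.trans (hcov T hT)) hiS hi₁S
  obtain ⟨i₀, h₀⟩ : ∃ i, 0 < a i ∧ 0 < a (i + 1) := by
    obtain ⟨i, j, hij, hi, hj⟩ :=
      exists_adj_pos_of_forall_isVertexCover_pos fun S hS => ht.trans_le (hcov S hS)
    rcases (cycleGraph_adj.1 hij).2 with rfl | rfl
    · exact ⟨i, hi, hj⟩
    · exact ⟨j, hj, hi⟩
  have hpos : ∀ j, 0 < a j ∧ 0 < a (j + 1) :=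
    Fin.induction_add_one h₀ fun j hj => ⟨hj.2, hj.2.trans_le (hstep j hj.1 hj.2)⟩
  have hmono : ∀ j, a j ≤ a (j + 1) := fun j => by
    simpa using hstep (j - 1) (hpos _).1 (hpos _).2
  have hge : ∀ i j, a i ≤ a j := fun i =>
    Fin.induction_add_one le_rfl fun k hk => hk.trans (hmono k)
  have hsum : ∀ T : Finset (Fin m), ∑ k ∈ T, a k = T.card * a 0 := fun T => by
    rw [Finset.sum_congr rfl fun j _ => le_antisymm (hge j 0) (hge 0 j), Finset.sum_const,
      smul_eq_mul]
  obtain ⟨S, hS, -, -, hSt⟩ := htight 0 (hpos 0).1 (hpos 0).2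
  have hcard := hS.cycleGraph_le_two_mul_card hm
  rw [hsum] at hdeg hSt
  rw [Finset.card_univ, Fintype.card_fin] at hdeg
  obtain ⟨k, rfl⟩ := hodd
  have : 2 * k + 2 ≤ 2 * S.card := by omega
  nlinarith [(hpos 0).1]

end Cycle

theorem edgeIdeal_pow_eq_span_Lset_general (K : Type*) [Field K] (n t : ℕ)
    (hn : 1 ≤ n) :
    edgeIdeal K (cycleGraph (2 * n + 1)) ^ t
      = Ideal.span (Lset K (cycleGraph (2 * n + 1)) t) := by
  refine le_antisymm (edgeIdeal_pow_le_span_Lset t) (Ideal.span_le.2 ?_)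
  rintro _ ⟨a, rfl, hdeg, hmin⟩
  refine monomial_mem_edgeIdeal_pow_of_exists_adj (fun s b hs hdeg hcov => ?_) hdeg
    fun S hS => ?_
  · obtain ⟨i, hi, hi₁, hlt⟩ := cycleGraph_exists_edge_forall_isVertexCover_lt (by omega)
      (odd_two_mul_add_one n) hs hdeg hcov
    exact ⟨i, i + 1, cycleGraph_adj_add_one (by omega) i, hi, hi₁, hlt⟩
  · obtain ⟨T, hTS, hT⟩ := hS.exists_isMinVertexCover_subset
    exact (hmin T hT).trans (Finset.sum_le_sum_of_subset hTS)

/-- For the edge ideal of an odd cycle, `I^t = (L(t))`. -/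
theorem edgeIdeal_pow_eq_span_Lset (K : Type*) [Field K] (n t : ℕ)
    (hn : 1 ≤ n) (ht : 1 ≤ t) :
    edgeIdeal K (cycleGraph (2 * n + 1)) ^ t
      = Ideal.span (Lset K (cycleGraph (2 * n + 1)) t) :=
  edgeIdeal_pow_eq_span_Lset_general K n t hn
end
end

section
/- Let C_{2n+1} be the odd cycle on vertices x_1,…,x_{2n+1} and t ≥ 1. If a monomial x^a = x_1^{a_1}⋯x_{2n+1}^{a_{2n+1}} has a_i = 0 for some i, then x^a ∉ (D(t)), the ideal generated by the set D(t). -/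
open MvPolynomial

noncomputable section

/-!
A monomial ideal contains `x^a` only if one of its monomial generators divides `x^a`, so it
suffices to show that no `x^b ∈ D(t)` has `b_i = 0`. Splitting the odd cycle at `i`, the vertices
at even forward distance from `i` and the vertex `i` together with those at odd distance are two
minimal vertex covers that overlap exactly in `i` and together contain every vertex. Their
weights therefore add up to `deg x^b + b_i = deg x^b < 2t`, so one of them is less than `t`.
-/

theorem IsVertexCover.isMinVertexCover {N : ℕ} {G : SimpleGraph (Fin N)} {S : Finset (Fin N)}
    (hS : IsVertexCover G S) (h : ∀ v ∈ S, ∃ u ∉ S, G.Adj v u) : IsMinVertexCover G S := by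
  refine ⟨hS, fun T hTS hT => ?_⟩
  obtain ⟨v, hvS, hvT⟩ := Finset.exists_of_ssubset hTS
  obtain ⟨u, huS, hvu⟩ := h v hvS
  exact (hT hvu).elim hvT fun huT => huS (hTS.subset huT)

theorem Fin.val_sub_eq_ite {m : ℕ} (a b : Fin m) :
    ((a - b : Fin m) : ℕ) = if (b : ℕ) ≤ a then (a : ℕ) - b else m + a - b := by
  split_ifs with h
  exacts [Fin.coe_sub_iff_le.2 h, Fin.coe_sub_iff_lt.2 (Fin.lt_def.2 (not_le.1 h))]

theorem cycleGraph_adj_iff {m : ℕ} (hm : 2 ≤ m) {u v : Fin m} :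
    (cycleGraph m).Adj u v ↔ (v : ℕ) = u + 1 ∨ (u : ℕ) = v + 1 ∨
      (u : ℕ) + 1 = m ∧ (v : ℕ) = 0 ∨ (v : ℕ) + 1 = m ∧ (u : ℕ) = 0 := by
  have succ_mod : ∀ x : Fin m, ((x : ℕ) + 1) % m = if (x : ℕ) + 1 = m then (0 : ℕ) else x + 1 := by
    intro x
    split_ifs with h
    · rw [h, Nat.mod_self]
    · exact Nat.mod_eq_of_lt (by omega)
  simp only [cycleGraph, SimpleGraph.fromRel_adj, ne_eq, Fin.ext_iff, succ_mod]
  split_ifs <;> omega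

theorem cycleGraph_adj_add_one_s7 {k : ℕ} (hk : 1 ≤ k) (v : Fin (k + 1)) :
    (cycleGraph (k + 1)).Adj v (v + 1) := by
  rw [cycleGraph_adj_iff (by omega), Fin.val_add_one]
  split_ifs with h <;> simp only [Fin.ext_iff, Fin.val_last] at h <;> omega

def evenOffsetCover {m : ℕ} (i : Fin m) : Finset (Fin m) :=
  {v | Even ((v - i : Fin m) : ℕ)}

theorem mem_evenOffsetCover {m : ℕ} {i v : Fin m} :
    v ∈ evenOffsetCover i ↔ Even ((v - i : Fin m) : ℕ) := by
  simp [evenOffsetCover]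

theorem isMinVertexCover_evenOffsetCover {n : ℕ} (hn : 1 ≤ n) (i : Fin (2 * n + 1)) :
    IsMinVertexCover (cycleGraph (2 * n + 1)) (evenOffsetCover i) := by
  refine IsVertexCover.isMinVertexCover (fun u v huv => ?_) (fun v hv => ?_)
  · rw [cycleGraph_adj_iff (by omega)] at huv
    simp only [mem_evenOffsetCover, Fin.val_sub_eq_ite, Nat.even_iff]
    split_ifs <;> omega
  · by_cases hvi : v = i
    · refine ⟨v + 1, ?_, cycleGraph_adj_add_one_s7 (by omega) v⟩
      simp only [mem_evenOffsetCover, Fin.val_sub_eq_ite, Nat.even_iff, Fin.val_add_one,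
        Fin.ext_iff, Fin.val_last] at hvi ⊢
      split_ifs <;> omega
    · obtain ⟨w, rfl⟩ : ∃ w, w + 1 = v := ⟨v - 1, sub_add_cancel v 1⟩
      refine ⟨w, ?_, (cycleGraph_adj_add_one_s7 (by omega) w).symm⟩
      simp only [mem_evenOffsetCover, Fin.val_sub_eq_ite, Nat.even_iff, Fin.val_add_one,
        Fin.ext_iff, Fin.val_last] at hv hvi ⊢
      split_ifs at hv hvi ⊢ <;> omega

theorem isMinVertexCover_insert_compl_evenOffsetCover {n : ℕ} (hn : 1 ≤ n)
    (i : Fin (2 * n + 1)) :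
    IsMinVertexCover (cycleGraph (2 * n + 1)) (insert i (evenOffsetCover i)ᶜ) := by
  refine IsVertexCover.isMinVertexCover (fun u v huv => ?_) (fun v hv => ?_)
  · rw [cycleGraph_adj_iff (by omega)] at huv
    simp only [Finset.mem_insert, Finset.mem_compl, mem_evenOffsetCover, Fin.val_sub_eq_ite,
      Nat.even_iff, Fin.ext_iff]
    split_ifs <;> omega
  · by_cases hvi : v = i
    · obtain ⟨w, rfl⟩ : ∃ w, w + 1 = v := ⟨v - 1, sub_add_cancel v 1⟩
      refine ⟨w, ?_, (cycleGraph_adj_add_one_s7 (by omega) w).symm⟩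
      simp only [Finset.mem_insert, Finset.mem_compl, mem_evenOffsetCover, Fin.val_sub_eq_ite,
        Nat.even_iff, Fin.val_add_one, Fin.ext_iff, Fin.val_last] at hvi ⊢
      split_ifs at hvi ⊢ <;> omega
    · refine ⟨v + 1, ?_, cycleGraph_adj_add_one_s7 (by omega) v⟩
      simp only [Finset.mem_insert, Finset.mem_compl, mem_evenOffsetCover, Fin.val_sub_eq_ite,
        Nat.even_iff, Fin.val_add_one, Fin.ext_iff, Fin.val_last] at hv hvi ⊢
      split_ifs at hv hvi ⊢ <;> omega

theorem sum_evenOffsetCover_add_sum_insert_compl {m : ℕ} {M : Type*} [AddCommMonoid M]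
    (i : Fin m) (f : Fin m → M) :
    ∑ v ∈ evenOffsetCover i, f v + ∑ v ∈ insert i (evenOffsetCover i)ᶜ, f v = ∑ v, f v + f i := by
  rw [Finset.sum_insert (by simp [mem_evenOffsetCover, Fin.val_sub_eq_ite]), add_left_comm,
    Finset.sum_add_sum_compl, add_comm]

theorem monomial_mem_span_Dset_iff {K : Type*} [Field K] {N : ℕ} (G : SimpleGraph (Fin N))
    (t : ℕ) (a : Fin N →₀ ℕ) :
    monomial a (1 : K) ∈ Ideal.span (Dset K G t) ↔ ∃ b ≤ a, (∑ i, b i) < 2 * t ∧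
      ∀ S : Finset (Fin N), IsMinVertexCover G S → t ≤ ∑ i ∈ S, b i := by
  classical
  have hD : Dset K G t = (fun b => monomial b (1 : K)) ''
      {b | (∑ i, b i) < 2 * t ∧ ∀ S, IsMinVertexCover G S → t ≤ ∑ i ∈ S, b i} := by
    ext p
    simp only [Dset, Set.mem_ofPred_eq, Set.mem_image]
    exact ⟨fun ⟨b, hp, hb⟩ => ⟨b, hb, hp.symm⟩, fun ⟨b, hb, hp⟩ => ⟨b, hp.symm, hb⟩⟩
  rw [hD, mem_ideal_span_monomial_image, support_monomial, if_neg one_ne_zero]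
  simp only [Finset.mem_singleton, forall_eq, Set.mem_ofPred_eq]
  exact ⟨fun ⟨b, hb, hba⟩ => ⟨b, hba, hb⟩, fun ⟨b, hba, hb⟩ => ⟨b, hb, hba⟩⟩

theorem monomial_not_mem_span_Dset_of_exists_zero_general (K : Type*) [Field K] (n t : ℕ)
    (hn : 1 ≤ n) (a : Fin (2 * n + 1) →₀ ℕ)
    (i : Fin (2 * n + 1)) (hai : a i = 0) :
    (monomial a (1 : K)) ∉ Ideal.span (Dset K (cycleGraph (2 * n + 1)) t) := by
  rw [monomial_mem_span_Dset_iff]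
  rintro ⟨b, hba, hdeg, hcover⟩
  have hbi : b i = 0 := Nat.eq_zero_of_le_zero (hai ▸ hba i)
  have hsum := sum_evenOffsetCover_add_sum_insert_compl i b
  have heven := hcover _ (isMinVertexCover_evenOffsetCover hn i)
  have hodd := hcover _ (isMinVertexCover_insert_compl_evenOffsetCover hn i)
  omega

/-- If a monomial `x^a` on the odd cycle has some exponent equal to `0`, then
`x^a ∉ (D(t))`. -/
theorem monomial_not_mem_span_Dset_of_exists_zero (K : Type*) [Field K] (n t : ℕ)
    (hn : 1 ≤ n) (ht : 1 ≤ t) (a : Fin (2 * n + 1) →₀ ℕ)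
    (i : Fin (2 * n + 1)) (hai : a i = 0) :
    (monomial a (1 : K)) ∉ Ideal.span (Dset K (cycleGraph (2 * n + 1)) t) :=
  monomial_not_mem_span_Dset_of_exists_zero_general K n t hn a i hai
end
end

section
/- Let C_{2n+1} be the odd cycle on vertices x_1,…,x_{2n+1} and t ≥ 1. If a monomial x^a satisfies w_{V'}(x^a) ≥ t for every minimal vertex cover V' of C_{2n+1}, then (n+1)·deg(x^a) ≥ (2n+1)·t. -/
open MvPolynomial

noncomputable section

/-!
Rotating the vertex set `{0, 2, …, 2n}` around the odd cycle gives `2n + 1` minimal vertex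
covers, and every vertex lies in exactly `n + 1` of them. Summing the weight bound `t` over
these covers therefore counts each exponent `n + 1` times.
-/

open Finset

theorem card_smul_le_smul_sum_of_le_sum {ι κ M : Type*} [Fintype ι] [Fintype κ] [DecidableEq ι]
    [AddCommMonoid M] [PartialOrder M] [IsOrderedAddMonoid M]
    (S : κ → Finset ι) (a : ι → M) {t : M} {c : ℕ}
    (hS : ∀ k, t ≤ ∑ i ∈ S k, a i) (hc : ∀ i, #{k | i ∈ S k} = c) :
    Fintype.card κ • t ≤ c • ∑ i, a i :=
  calc Fintype.card κ • t = ∑ _k : κ, t := by rw [sum_const, card_univ]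
    _ ≤ ∑ k, ∑ i ∈ S k, a i := sum_le_sum fun k _ => hS k
    _ = ∑ i, ∑ k ∈ {k | i ∈ S k}, a i := sum_comm' (by simp)
    _ = c • ∑ i, a i := by simp only [sum_const, hc, smul_sum]

theorem IsVertexCover.isMinVertexCover_of_forall_exists_adj_notMem {N : ℕ}
    {G : SimpleGraph (Fin N)} {S : Finset (Fin N)} (hS : IsVertexCover G S)
    (h : ∀ v ∈ S, ∃ w ∉ S, G.Adj v w) :
    IsMinVertexCover G S := by
  refine ⟨hS, fun T hTS hT => ?_⟩
  obtain ⟨v, hvS, hvT⟩ := exists_of_ssubset hTS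
  obtain ⟨w, hwS, hvw⟩ := h v hvS
  exact (hT hvw).elim hvT fun hwT => hwS (hTS.subset hwT)

theorem Nat.count_even_two_mul_add_one (n : ℕ) : Nat.count Even (2 * n + 1) = n + 1 := by
  induction n with
  | zero => simp [Nat.count_succ]
  | succ n ih =>
    rw [show 2 * (n + 1) + 1 = 2 * n + 1 + 1 + 1 by ring, Nat.count_succ, Nat.count_succ, ih]
    simp [Nat.even_add_one, parity_simps]

theorem Fin.card_filter_val_eq_count (m : ℕ) (p : ℕ → Prop) [DecidablePred p] :
    #{r : Fin m | p r} = Nat.count p m := by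
  rw [Nat.count_eq_card_filter_range]
  refine card_nbij (·.val) (fun r hr => by simpa using hr) (fun r _ s _ h => Fin.ext h)
    fun x hx => ?_
  simp only [coe_filter, mem_range, Set.mem_ofPred_eq] at hx
  exact ⟨⟨x, hx.1⟩, by simp [hx.2], rfl⟩

namespace cycleGraph

variable {m : ℕ} [NeZero m]

theorem adj_iff {i j : Fin m} :
    (cycleGraph m).Adj i j ↔ i ≠ j ∧ (j = i + 1 ∨ i = j + 1) := by
  simp [cycleGraph, SimpleGraph.fromRel_adj, Fin.ext_iff, Fin.val_add]

theorem adj_add_one (hm : 1 < m) (i : Fin m) : (cycleGraph m).Adj i (i + 1) := by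
  rw [adj_iff]
  refine ⟨fun h => ?_, Or.inl rfl⟩
  have h1 : (1 : Fin m) = 0 := left_eq_add.mp h
  simp [Fin.ext_iff, Nat.mod_eq_of_lt hm] at h1

end cycleGraph

namespace Fin

variable {n : ℕ}

theorem even_val_or_even_val_add_one (r : Fin (2 * n + 1)) : Even r.val ∨ Even (r + 1).val := by
  rcases Nat.lt_or_ge (r.val + 1) (2 * n + 1) with h | h
  · rw [val_add_one_of_lt' h, Nat.even_add_one]
    exact em _
  · exact Or.inl ⟨n, by omega⟩

theorem not_even_val_add_one_or_not_even_val_sub_one (hn : n ≠ 0) {r : Fin (2 * n + 1)}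
    (hr : Even r.val) : ¬Even (r + 1).val ∨ ¬Even (r - 1).val := by
  rcases Nat.lt_or_ge (r.val + 1) (2 * n + 1) with h | h
  · left
    rwa [val_add_one_of_lt' h, Nat.even_add_one, not_not]
  · right
    have hr0 : r ≠ 0 := fun h0 => by simp [h0] at h; omega
    rw [val_sub_one_of_ne_zero hr0]
    rintro ⟨k, hk⟩
    omega

end Fin

/-- The vertices `k, k + 2, …, k + 2n` of the cycle on `Fin (2n+1)`. -/
def evenCover (n : ℕ) (k : Fin (2 * n + 1)) : Finset (Fin (2 * n + 1)) :=
  {i | Even (i - k).val}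

theorem card_filter_mem_evenCover (n : ℕ) (i : Fin (2 * n + 1)) :
    #{k | i ∈ evenCover n k} = n + 1 := by
  rw [← Nat.count_even_two_mul_add_one n, ← Fin.card_filter_val_eq_count]
  exact card_equiv (Equiv.subLeft i) (by simp [evenCover])

theorem isMinVertexCover_evenCover {n : ℕ} (hn : n ≠ 0) (k : Fin (2 * n + 1)) :
    IsMinVertexCover (cycleGraph (2 * n + 1)) (evenCover n k) := by
  have hcover : IsVertexCover (cycleGraph (2 * n + 1)) (evenCover n k) := by
    intro i j hij
    have key (v : Fin (2 * n + 1)) : v ∈ evenCover n k ∨ v + 1 ∈ evenCover n k := by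
      simpa [evenCover, sub_add_eq_add_sub] using Fin.even_val_or_even_val_add_one (v - k)
    rcases (cycleGraph.adj_iff.mp hij).2 with rfl | rfl
    · exact key i
    · exact (key j).symm
  refine hcover.isMinVertexCover_of_forall_exists_adj_notMem fun v hv => ?_
  have hm : 1 < 2 * n + 1 := by omega
  rcases Fin.not_even_val_add_one_or_not_even_val_sub_one hn (mem_filter.mp hv).2 with h | h
  · exact ⟨v + 1, by simpa [evenCover, sub_add_eq_add_sub] using h,
      cycleGraph.adj_add_one hm v⟩
  · refine ⟨v - 1, by simpa [evenCover, sub_right_comm] using h, ?_⟩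
    simpa using (cycleGraph.adj_add_one hm (v - 1)).symm

theorem deg_lower_bound_of_weights_general (n t : ℕ) (hn : 1 ≤ n)
    (a : Fin (2 * n + 1) → ℕ)
    (hw : ∀ S : Finset (Fin (2 * n + 1)),
      IsMinVertexCover (cycleGraph (2 * n + 1)) S → t ≤ ∑ i ∈ S, a i) :
    (2 * n + 1) * t ≤ (n + 1) * ∑ i, a i := by
  simpa using card_smul_le_smul_sum_of_le_sum (evenCover n) a
    (fun k => hw _ (isMinVertexCover_evenCover (by omega) k)) (card_filter_mem_evenCover n)

/-- If a monomial exponent vector `a` on `C_{2n+1}` has weight at least `t` with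
respect to every minimal vertex cover, then `(n+1)·deg(x^a) ≥ (2n+1)·t`. -/
theorem deg_lower_bound_of_weights (n t : ℕ) (hn : 1 ≤ n) (ht : 1 ≤ t)
    (a : Fin (2 * n + 1) → ℕ)
    (hw : ∀ S : Finset (Fin (2 * n + 1)),
      IsMinVertexCover (cycleGraph (2 * n + 1)) S → t ≤ ∑ i ∈ S, a i) :
    (2 * n + 1) * t ≤ (n + 1) * ∑ i, a i :=
  deg_lower_bound_of_weights_general n t hn a hw
end
end
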